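/- arXiv:0803.2088 — 5 statements merged into one kernel-verified Lean document; each statement's English description precedes it below -/
import Mathlib

section
/- For every real b > 0, every real z, and every natural number r, one has (b² + z²)^{−(r+1)} = (1/(r!)²) · ∫₀^∞ ∫₀^∞ e^{i(α−β)z} · e^{−(α+β)b} · (αβ)^r dα dβ, where the double integral is a complex-valued Lebesgue integral over (0,∞) × (0,∞) (its value is real). -/
/-!
With `c₁ = b - i z` and `c₂ = b + i z` the integrand factors as
`(α ^ r e^{-c₁ α}) (β ^ r e^{-c₂ β})`, so the double integral is a product of two Laplace
transforms `∫₀^∞ t ^ r e^{-c t} dt = r! / c ^ (r + 1)`, valid for `0 < Re c`, and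
`c₁ c₂ = b² + z²`. The Laplace transform is computed by induction on `r`, integrating by parts.
-/

open MeasureTheory Set Filter Topology Complex

section LaplacePow

variable {c : ℂ}

lemma norm_ofReal_pow_mul_cexp_neg_mul {t : ℝ} (ht : 0 ≤ t) (n : ℕ) :
    ‖(t : ℂ) ^ n * cexp (-(c * t))‖ = t ^ (n : ℝ) * Real.exp (-c.re * t) := by
  rw [norm_mul, norm_exp, norm_pow, norm_real, Real.norm_of_nonneg ht, Real.rpow_natCast]
  simp

lemma hasDerivAt_ofReal_pow_succ_mul_cexp_neg_mul (n : ℕ) (t : ℝ) :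
    HasDerivAt (fun t : ℝ ↦ (t : ℂ) ^ (n + 1) * cexp (-(c * t)))
      ((n + 1) * ((t : ℂ) ^ n * cexp (-(c * t))) - c * ((t : ℂ) ^ (n + 1) * cexp (-(c * t))))
      t := by
  have hexp := (((hasDerivAt_id (t : ℂ)).const_mul c).neg).cexp
  refine ((hasDerivAt_pow (n + 1) (t : ℂ)).mul hexp).comp_ofReal.congr_deriv ?_
  simp only [id, mul_one, Nat.add_sub_cancel, Nat.cast_add, Nat.cast_one, Pi.neg_apply]
  ring

variable (hc : 0 < c.re)
include hc

lemma integrableOn_ofReal_pow_mul_cexp_neg_mul_Ioi (n : ℕ) :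
    IntegrableOn (fun t : ℝ ↦ (t : ℂ) ^ n * cexp (-(c * t))) (Ioi 0) := by
  have h : IntegrableOn (fun t : ℝ ↦ t ^ (n : ℝ) * Real.exp (-c.re * t)) (Ioi 0) := by
    simpa only [Real.rpow_one] using integrableOn_rpow_mul_exp_neg_mul_rpow (p := 1)
      (neg_one_lt_zero.trans_le n.cast_nonneg) one_pos hc
  refine h.mono' (by fun_prop) ((ae_restrict_mem measurableSet_Ioi).mono fun t ht ↦ ?_)
  exact (norm_ofReal_pow_mul_cexp_neg_mul (mem_Ioi.mp ht).le n).le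

lemma tendsto_ofReal_pow_mul_cexp_neg_mul_atTop (n : ℕ) :
    Tendsto (fun t : ℝ ↦ (t : ℂ) ^ n * cexp (-(c * t))) atTop (𝓝 0) := by
  rw [tendsto_zero_iff_norm_tendsto_zero]
  refine (tendsto_rpow_mul_exp_neg_mul_atTop_nhds_zero n c.re hc).congr' ?_
  filter_upwards [eventually_ge_atTop 0] with t ht
  exact (norm_ofReal_pow_mul_cexp_neg_mul ht n).symm

lemma mul_integral_ofReal_pow_succ_mul_cexp_neg_mul_Ioi (n : ℕ) :
    c * ∫ t in Ioi (0 : ℝ), (t : ℂ) ^ (n + 1) * cexp (-(c * t)) =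
      (n + 1) * ∫ t in Ioi (0 : ℝ), (t : ℂ) ^ n * cexp (-(c * t)) := by
  have hint := integrableOn_ofReal_pow_mul_cexp_neg_mul_Ioi hc
  have hparts := integral_Ioi_of_hasDerivAt_of_tendsto'
    (fun t _ ↦ hasDerivAt_ofReal_pow_succ_mul_cexp_neg_mul n t)
    (((hint n).const_mul _).sub ((hint (n + 1)).const_mul c))
    (tendsto_ofReal_pow_mul_cexp_neg_mul_atTop hc (n + 1))
  rw [integral_sub ((hint n).const_mul _) ((hint (n + 1)).const_mul c), integral_const_mul,
    integral_const_mul] at hparts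
  simp only [ofReal_zero, zero_pow n.succ_ne_zero, zero_mul, sub_zero] at hparts
  linear_combination -hparts

lemma integral_ofReal_pow_mul_cexp_neg_mul_Ioi (n : ℕ) :
    ∫ t in Ioi (0 : ℝ), (t : ℂ) ^ n * cexp (-(c * t)) = n.factorial / c ^ (n + 1) := by
  induction n with
  | zero =>
    simpa [neg_div, div_neg, mul_comm] using integral_exp_mul_complex_Ioi (a := -c) (by simpa) 0
  | succ n ih =>
    have hc0 := ne_zero_of_re_pos hc
    rw [← mul_right_inj' hc0,
      mul_integral_ofReal_pow_succ_mul_cexp_neg_mul_Ioi hc, ih, Nat.factorial_succ]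
    push_cast
    field_simp
    ring

end LaplacePow

/-- For `b > 0`, `z ∈ ℝ` and `r ∈ ℕ`,
`(b² + z²)^{−(r+1)} = (1/(r!)²) ∫₀^∞ ∫₀^∞ e^{i(α−β)z} e^{−(α+β)b} (αβ)^r dα dβ`. -/
theorem inv_pow_eq_double_laplace (b : ℝ) (hb : 0 < b) (z : ℝ) (r : ℕ) :
    (((b ^ 2 + z ^ 2 : ℝ) : ℂ)) ^ (-(r + 1 : ℤ)) =
      (1 / ((r.factorial : ℂ)) ^ 2) *
        ∫ β in Set.Ioi (0 : ℝ), ∫ α in Set.Ioi (0 : ℝ),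
          Complex.exp (Complex.I * ((α : ℂ) - (β : ℂ)) * (z : ℂ)) *
            Complex.exp (-((α : ℂ) + (β : ℂ)) * (b : ℂ)) *
            ((α : ℂ) * (β : ℂ)) ^ r := by
  set c₁ : ℂ := b - I * z
  set c₂ : ℂ := b + I * z
  have hc₁ : 0 < c₁.re := by simpa [c₁] using hb
  have hc₂ : 0 < c₂.re := by simpa [c₂] using hb
  have hsplit : ∀ α β : ℝ,
      cexp (I * ((α : ℂ) - β) * z) * cexp (-((α : ℂ) + β) * b) * ((α : ℂ) * β) ^ r =
        ((β : ℂ) ^ r * cexp (-(c₂ * β))) * ((α : ℂ) ^ r * cexp (-(c₁ * α))) := by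
    intro α β
    rw [← exp_add, show I * ((α : ℂ) - β) * z + -((α : ℂ) + β) * b = -(c₂ * β) + -(c₁ * α) by
      simp only [c₁, c₂]; ring, exp_add]
    ring
  have hprod : c₁ * c₂ = ((b ^ 2 + z ^ 2 : ℝ) : ℂ) := by
    push_cast
    linear_combination -(z : ℂ) ^ 2 * I_sq
  have hfac : (r.factorial : ℂ) ≠ 0 := Nat.cast_ne_zero.mpr r.factorial_ne_zero
  simp_rw [hsplit, integral_const_mul, integral_mul_const,
    integral_ofReal_pow_mul_cexp_neg_mul_Ioi hc₁, integral_ofReal_pow_mul_cexp_neg_mul_Ioi hc₂,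
    ← hprod, zpow_neg, ← Nat.cast_succ, zpow_natCast, mul_pow]
  field_simp
end

section
/- Let α and l be natural numbers and let L_l^α denote the generalized Laguerre polynomial of degree l and order α. Then ∫₀^∞ e^{−y/2} · L_l^α(y) · y^α dy = (−1)^l · 2^{α+1} · (l+α)! / l!. -/
/-!
Expanding `L_l^α` termwise, the `j`-th term contributes a Gamma integral
`∫₀^∞ y^(j+α) e^{-y/2} dy = (j+α)! 2^(j+α+1)`. After cancelling factorials its coefficient
becomes `binom(l, j) (-2)^j` times the common factor `2^(α+1) (l+α)!/l!`, and the binomial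
theorem sums these to `(1 - 2)^l = (-1)^l`.
-/

open MeasureTheory

/-- The generalized Laguerre polynomial of degree `l` and order `α`:
`L_l^α(x) = Σ_{j=0}^{l} binom(l+α, l−j) (−x)^j / j!`. -/
noncomputable def laguerre (l α : ℕ) (x : ℝ) : ℝ :=
  ∑ j ∈ Finset.range (l + 1),
    (Nat.choose (l + α) (l - j) : ℝ) * (-x) ^ j / (j.factorial : ℝ)

open Real Set Finset
open scoped Nat

theorem integral_pow_mul_exp_neg_mul_Ioi {c : ℝ} (hc : 0 < c) (k : ℕ) :
    ∫ x in Ioi (0 : ℝ), x ^ k * exp (-(c * x)) = k ! / c ^ (k + 1) := by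
  have h := integral_rpow_mul_exp_neg_mul_Ioi (a := k + 1) (by positivity) hc
  rw [add_sub_cancel_right, Gamma_nat_eq_factorial, ← Nat.cast_succ, rpow_natCast, one_div,
    inv_pow] at h
  simpa only [rpow_natCast, div_eq_inv_mul] using h

theorem integrableOn_pow_mul_exp_neg_mul_Ioi {c : ℝ} (hc : 0 < c) (k : ℕ) :
    IntegrableOn (fun x : ℝ ↦ x ^ k * exp (-(c * x))) (Ioi 0) :=
  .of_integral_ne_zero (by rw [integral_pow_mul_exp_neg_mul_Ioi hc]; positivity)

theorem choose_add_sub_mul_factorial_div_factorial {l j : ℕ} (α : ℕ) (hj : j ≤ l) :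
    ((l + α).choose (l - j) : ℝ) * (j + α)! / j ! = l.choose j * (l + α)! / l ! := by
  have hsub : l + α - (l - j) = j + α := by omega
  rw [Nat.cast_choose ℝ (by omega : l - j ≤ l + α), hsub, Nat.cast_choose ℝ hj]
  field_simp

theorem sum_range_neg_two_pow_mul_choose (l : ℕ) :
    ∑ j ∈ range (l + 1), (-2 : ℝ) ^ j * l.choose j = (-1) ^ l := by
  simpa [show (-2 : ℝ) + 1 = -1 by norm_num] using (add_pow (-2 : ℝ) 1 l).symm

theorem exp_neg_half_mul_laguerre_mul_pow_eq_sum (l α : ℕ) (y : ℝ) :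
    exp (-y / 2) * laguerre l α y * y ^ α =
      ∑ j ∈ range (l + 1), ((l + α).choose (l - j) : ℝ) * (-1) ^ j / j ! *
        (y ^ (j + α) * exp (-(1 / 2 * y))) := by
  simp only [laguerre, Finset.sum_mul, Finset.mul_sum]
  refine Finset.sum_congr rfl fun j _ ↦ ?_
  rw [pow_add, neg_pow, show -(1 / 2 * y) = -y / 2 by ring]
  ring

/-- `∫₀^∞ e^{−y/2} L_l^α(y) y^α dy = (−1)^l 2^{α+1} (l+α)!/l!`. -/
theorem integral_exp_neg_half_mul_laguerre (l α : ℕ) :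
    (∫ y in Set.Ioi (0 : ℝ), Real.exp (-y / 2) * laguerre l α y * y ^ α) =
      (-1 : ℝ) ^ l * 2 ^ (α + 1) * ((l + α).factorial : ℝ) / (l.factorial : ℝ) := by
  have hhalf : (0 : ℝ) < 1 / 2 := by norm_num
  simp_rw [exp_neg_half_mul_laguerre_mul_pow_eq_sum]
  rw [integral_finsetSum _ fun j _ ↦
    (integrableOn_pow_mul_exp_neg_mul_Ioi hhalf (j + α)).const_mul _]
  simp_rw [integral_const_mul, integral_pow_mul_exp_neg_mul_Ioi hhalf]
  calc ∑ j ∈ range (l + 1), ((l + α).choose (l - j) : ℝ) * (-1) ^ j / j ! *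
        ((j + α)! / (1 / 2) ^ (j + α + 1))
      = ∑ j ∈ range (l + 1), (-2 : ℝ) ^ j * l.choose j * (2 ^ (α + 1) * (l + α)! / l !) := by
        refine Finset.sum_congr rfl fun j hj ↦ ?_
        have hcoef := choose_add_sub_mul_factorial_div_factorial α
          (Nat.lt_succ_iff.mp (Finset.mem_range.mp hj))
        rw [one_div, inv_pow, div_inv_eq_mul, neg_pow (2 : ℝ), pow_add, pow_add]
        linear_combination (-1 : ℝ) ^ j * 2 ^ j * 2 ^ α * 2 ^ 1 * hcoef
    _ = (-1 : ℝ) ^ l * 2 ^ (α + 1) * (l + α)! / l ! := by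
        rw [← Finset.sum_mul, sum_range_neg_two_pow_mul_choose]; ring
end

section
/- Let m ≥ 1 and l be natural numbers, let ν > 0 be real, and let L_l^{m−1} denote the generalized Laguerre polynomial of degree l and order m−1. Then ∫_{ℝ^{2m}} e^{−ν‖X‖²/4} · L_l^{m−1}(ν‖X‖²/2) dX = (−1)^l · (4π/ν)^m · binom(l+m−1, l). -/
open MeasureTheory

/-!
Expanding the Laguerre polynomial, the integral becomes a finite combination of the Gaussian
moments `∫_{ℝ^{2m}} ‖X‖^{2j} e^{-b‖X‖²} dX = (π/b)^m binom(m-1+j, j) j! / b^j`, computed in polar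
coordinates. With `b = ν/4` this leaves the identity
`Σ_j binom(l+m-1, l-j) (-2)^j binom(m-1+j, j) = (-1)^l binom(l+m-1, l)`. Since
`(-1)^j binom(m-1+j, j) = binom(-m, j)`, writing `2^j = Σ_i binom(j, i)` and applying
Chu–Vandermonde in the binomial ring `ℤ` reduces the left side to
`Σ_i binom(-m, i) binom(l-i-1, l-i)`, where only `i = l` survives.
-/

open Finset

theorem Ring.sum_range_choose_sub_mul_choose {R : Type*} [Ring R] [BinomialRing R]
    (n : ℕ) (r : R) (s : ℕ) :
    ∑ k ∈ range (s + 1), (n.choose (s - k) : R) * Ring.choose r k = Ring.choose (n + r) s := by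
  rw [Ring.add_choose_eq s (Nat.cast_commute n r), Nat.sum_antidiagonal_eq_sum_range_succ
    (fun i j ↦ Ring.choose (n : R) i * Ring.choose r j), ← sum_range_reflect]
  refine sum_congr rfl fun k hk ↦ ?_
  rw [Nat.add_sub_cancel, Ring.choose_natCast, Nat.sub_sub_self (by grind)]

theorem Ring.choose_natCast_sub_one_self {R : Type*} [Ring R] [BinomialRing R] (s : ℕ) :
    Ring.choose ((s : R) - 1) s = if s = 0 then 1 else 0 := by
  rcases s with _ | s
  · simp
  · rw [if_neg s.succ_ne_zero, Nat.cast_succ, add_sub_cancel_right, Ring.choose_natCast,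
      Nat.choose_eq_zero_of_lt s.lt_succ_self, Nat.cast_zero]

theorem Ring.choose_neg_natCast_add_one (a j : ℕ) :
    Ring.choose (-(a + 1 : ℤ)) j = (-1) ^ j * ((a + j).choose j : ℤ) := by
  rw [Ring.choose_neg, Units.smul_def, Int.coe_negOnePow_natCast, smul_eq_mul,
    show (a + 1 : ℤ) + j - 1 = ((a + j : ℕ) : ℤ) by push_cast; ring, Ring.choose_natCast]

theorem sum_choose_mul_two_pow_mul_choose (N l : ℕ) (r : ℤ) :
    ∑ j ∈ range (l + 1), (N.choose (l - j) : ℤ) * 2 ^ j * Ring.choose r j =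
      ∑ i ∈ range (l + 1), Ring.choose r i * Ring.choose (N + r - i) (l - i) := by
  have hexpand : ∀ j ∈ range (l + 1), (N.choose (l - j) : ℤ) * 2 ^ j * Ring.choose r j =
      ∑ i ∈ Ico 0 (j + 1),
        Ring.choose r i * ((N.choose (l - j) : ℤ) * Ring.choose (r - i) (j - i)) := by
    intro j _
    rw [← range_eq_Ico, ← Nat.cast_ofNat, ← Nat.cast_pow, ← Nat.sum_range_choose, Nat.cast_sum,
      mul_sum, sum_mul]
    refine sum_congr rfl fun i hi ↦ ?_
    have := Ring.choose_smul_choose r (Nat.le_of_lt_succ (mem_range.mp hi))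
    rw [nsmul_eq_mul] at this
    rw [mul_assoc, this]
    ring
  rw [sum_congr rfl hexpand, range_eq_Ico, ← sum_Ico_Ico_comm]
  refine sum_congr rfl fun i hi ↦ ?_
  rw [mem_Ico] at hi
  rw [← mul_sum, sum_Ico_eq_sum_range, show l + 1 - i = l - i + 1 by omega,
    add_sub_assoc, ← Ring.sum_range_choose_sub_mul_choose]
  congr 1
  refine sum_congr rfl fun k _ ↦ ?_
  rw [show l - (i + k) = l - i - k by omega, Nat.add_sub_cancel_left]

theorem sum_choose_mul_two_pow_mul_choose_of_add_eq (N l : ℕ) (r : ℤ) (h : N + r + 1 = l) :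
    ∑ j ∈ range (l + 1), (N.choose (l - j) : ℤ) * 2 ^ j * Ring.choose r j = Ring.choose r l := by
  rw [sum_choose_mul_two_pow_mul_choose, sum_eq_single_of_mem l (self_mem_range_succ l)]
  · simp
  · intro i hi hil
    have hil : i < l := lt_of_le_of_ne (Nat.le_of_lt_succ (mem_range.mp hi)) hil
    rw [show (N : ℤ) + r - i = ((l - i : ℕ) : ℤ) - 1 by push_cast [hil.le]; omega,
      Ring.choose_natCast_sub_one_self, if_neg (by omega), mul_zero]

theorem sum_choose_mul_neg_two_pow_mul_choose (l a : ℕ) :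
    ∑ j ∈ range (l + 1), ((l + a).choose (l - j) : ℝ) * (-2) ^ j * ((a + j).choose j : ℝ) =
      (-1) ^ l * ((l + a).choose l : ℝ) := by
  have h := sum_choose_mul_two_pow_mul_choose_of_add_eq (l + a) l (-(a + 1)) (by push_cast; ring)
  simp only [Ring.choose_neg_natCast_add_one, add_comm a l] at h
  convert congrArg (Int.cast : ℤ → ℝ) h using 1
  · push_cast
    refine sum_congr rfl fun j _ ↦ ?_
    rw [neg_pow]
    ring
  · push_cast
    rfl

section GaussianMoments

open Real Set Module

variable {E : Type*} [NormedAddCommGroup E] [InnerProductSpace ℝ E] [FiniteDimensional ℝ E]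
  [MeasurableSpace E] [BorelSpace E]

theorem integral_Ioi_pow_mul_exp_neg_mul_sq (n : ℕ) {b : ℝ} (hb : 0 < b) :
    ∫ r in Ioi (0 : ℝ), r ^ n * exp (-b * r ^ 2) =
      Gamma ((n + 1) / 2) / (2 * b ^ (((n : ℝ) + 1) / 2)) := by
  have h := integral_rpow_mul_exp_neg_mul_rpow two_pos
    (lt_of_lt_of_le neg_one_lt_zero n.cast_nonneg) hb
  simp only [rpow_natCast, rpow_two] at h
  rw [h, neg_div, rpow_neg hb.le]
  field_simp

theorem integrable_norm_pow_mul_exp_neg_mul_sq_norm [Nontrivial E] (k : ℕ) {b : ℝ} (hb : 0 < b) :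
    Integrable (fun x : E ↦ ‖x‖ ^ k * exp (-b * ‖x‖ ^ 2)) := by
  rw [integrable_fun_norm_addHaar volume (f := fun r ↦ r ^ k * exp (-b * r ^ 2))]
  refine (integrableOn_rpow_mul_exp_neg_mul_sq hb
    (lt_of_lt_of_le neg_one_lt_zero (finrank ℝ E - 1 + k).cast_nonneg)).congr_fun
    (fun r _ ↦ ?_) measurableSet_Ioi
  simp only [rpow_natCast, smul_eq_mul, pow_add]
  ring

theorem integral_norm_pow_mul_exp_neg_mul_sq_norm [Nontrivial E] (k : ℕ) {b : ℝ} (hb : 0 < b) :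
    ∫ x : E, ‖x‖ ^ k * exp (-b * ‖x‖ ^ 2) =
      π ^ ((finrank ℝ E : ℝ) / 2) * Gamma ((finrank ℝ E + k) / 2) /
        (Gamma (finrank ℝ E / 2) * b ^ (((finrank ℝ E : ℝ) + k) / 2)) := by
  have hd : 0 < finrank ℝ E := finrank_pos
  have hball : volume.real (Metric.ball (0 : E) 1) =
      π ^ ((finrank ℝ E : ℝ) / 2) / Gamma (finrank ℝ E / 2 + 1) := by
    rw [measureReal_def, InnerProductSpace.volume_ball, ENNReal.ofReal_one, one_pow, one_mul,
      ENNReal.toReal_ofReal (by positivity), sqrt_eq_rpow, ← rpow_natCast, ← rpow_mul pi_pos.le]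
    ring_nf
  have hradial : ∫ r in Ioi (0 : ℝ), r ^ (finrank ℝ E - 1) • (r ^ k * exp (-b * r ^ 2)) =
      Gamma ((finrank ℝ E + k) / 2) / (2 * b ^ (((finrank ℝ E : ℝ) + k) / 2)) := by
    simp_rw [smul_eq_mul, ← mul_assoc, ← pow_add]
    rw [integral_Ioi_pow_mul_exp_neg_mul_sq _ hb]
    have : ((finrank ℝ E - 1 + k : ℕ) : ℝ) + 1 = finrank ℝ E + k := by push_cast [hd]; ring
    rw [this]
  rw [integral_fun_norm_addHaar volume (fun r ↦ r ^ k * exp (-b * r ^ 2)), hball, hradial,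
    Gamma_add_one (by positivity), nsmul_eq_mul, smul_eq_mul]
  field_simp

theorem integral_norm_pow_two_mul_mul_exp_neg_mul_sq_norm_of_finrank_eq {a : ℕ}
    (hE : finrank ℝ E = 2 * (a + 1)) (k : ℕ) {b : ℝ} (hb : 0 < b) :
    ∫ x : E, ‖x‖ ^ (2 * k) * exp (-b * ‖x‖ ^ 2) =
      (π / b) ^ (a + 1) * ((a + k).choose k * k.factorial / b ^ k) := by
  have : Nontrivial E := Module.nontrivial_of_finrank_pos (by rw [hE]; omega)
  have hfac := Nat.add_choose_mul_factorial_mul_factorial a k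
  rw [integral_norm_pow_mul_exp_neg_mul_sq_norm _ hb, hE]
  rw [show ((2 * (a + 1) : ℕ) : ℝ) / 2 = (a + 1 : ℕ) by push_cast; ring,
    show (((2 * (a + 1) : ℕ) : ℝ) + (2 * k : ℕ)) / 2 = (a + k + 1 : ℕ) by push_cast; ring,
    rpow_natCast, rpow_natCast]
  simp only [Nat.cast_succ, Gamma_nat_eq_factorial, ← hfac]
  push_cast
  rw [div_pow]
  field_simp
  ring

end GaussianMoments

/-- For `m ≥ 1`, `l ∈ ℕ` and `ν > 0`,
`∫_{ℝ^{2m}} e^{−ν‖X‖²/4} L_l^{m−1}(ν‖X‖²/2) dX = (−1)^l (4π/ν)^m binom(l+m−1, l)`. -/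
theorem integral_gaussian_mul_laguerre
    (m l : ℕ) (hm : 1 ≤ m) (ν : ℝ) (hν : 0 < ν) :
    (∫ X : EuclideanSpace ℝ (Fin (2 * m)),
        Real.exp (-ν * ‖X‖ ^ 2 / 4) * laguerre l (m - 1) (ν * ‖X‖ ^ 2 / 2)) =
      (-1 : ℝ) ^ l * (4 * Real.pi / ν) ^ m * (Nat.choose (l + m - 1) l : ℝ) := by
  obtain ⟨a, rfl⟩ : ∃ a, m = a + 1 := ⟨m - 1, by omega⟩
  have hb : 0 < ν / 4 := by positivity
  have hexpand (X : EuclideanSpace ℝ (Fin (2 * (a + 1)))) :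
      Real.exp (-ν * ‖X‖ ^ 2 / 4) * laguerre l (a + 1 - 1) (ν * ‖X‖ ^ 2 / 2) =
        ∑ j ∈ range (l + 1), (l + a).choose (l - j) * (-(ν / 2)) ^ j / j.factorial *
          (‖X‖ ^ (2 * j) * Real.exp (-(ν / 4) * ‖X‖ ^ 2)) := by
    rw [laguerre, Nat.add_sub_cancel, mul_sum]
    refine sum_congr rfl fun j _ ↦ ?_
    rw [pow_mul, show -(ν * ‖X‖ ^ 2 / 2) = -(ν / 2) * ‖X‖ ^ 2 by ring, mul_pow]
    ring_nf
  simp_rw [hexpand]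
  rw [integral_finsetSum _ fun j _ ↦
    (integrable_norm_pow_mul_exp_neg_mul_sq_norm _ hb).const_mul _]
  simp_rw [integral_const_mul, integral_norm_pow_two_mul_mul_exp_neg_mul_sq_norm_of_finrank_eq
    finrank_euclideanSpace_fin _ hb]
  calc _ = (4 * Real.pi / ν) ^ (a + 1) * ∑ j ∈ range (l + 1),
        ((l + a).choose (l - j) : ℝ) * (-2) ^ j * ((a + j).choose j : ℝ) := by
          rw [mul_sum]
          refine sum_congr rfl fun j _ ↦ ?_
          rw [show Real.pi / (ν / 4) = 4 * Real.pi / ν by ring,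
            show -(ν / 2) = -2 * (ν / 4) by ring, mul_pow]
          field_simp
    _ = _ := by
      rw [sum_choose_mul_neg_two_pow_mul_choose, show l + (a + 1) - 1 = l + a by omega]
      ring
end

section
/- For all natural numbers l and n, let g : ℝ → ℝ be the function g(y) = e^{−y} · y^{l+n}, and let g^{(l)} denote its l-th derivative. Then ∫₀^∞ e^{y/2} · g^{(l)}(y) dy = (−1)^l · 2^{n+1} · (l+n)!. -/
/-!
Write `f_m y = e^{-y} y^m`. Since `f_{m+1}' = (m + 1) f_m - f_{m+1}`, the integrals
`I(l, m) = ∫₀^∞ e^{c y} f_m^{(l)}(y) dy` (for `c < 1`) satisfy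
`I(l + 1, m + 1) = (m + 1) I(l, m) - I(l, m + 1)`. Starting from the Gamma integral
`I(0, m) = m! / (1 - c)^{m + 1}`, induction on `l` gives `I(l, m) = (-c)^l m! / (1 - c)^{m + 1}`
whenever `l ≤ m`; the theorem is the case `c = 1/2`.
-/

open MeasureTheory

theorem hasDerivAt_exp_neg_mul_pow_succ (m : ℕ) (y : ℝ) :
    HasDerivAt (fun y => Real.exp (-y) * y ^ (m + 1))
      ((m + 1) * (Real.exp (-y) * y ^ m) - Real.exp (-y) * y ^ (m + 1)) y :=
  ((hasDerivAt_neg y).exp.fun_mul (hasDerivAt_pow (m + 1) y)).congr_deriv <| by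
    rw [Nat.add_sub_cancel]; push_cast; ring

theorem iteratedDeriv_succ_exp_neg_mul_pow_succ (l m : ℕ) (y : ℝ) :
    iteratedDeriv (l + 1) (fun y => Real.exp (-y) * y ^ (m + 1)) y =
      (m + 1) * iteratedDeriv l (fun y => Real.exp (-y) * y ^ m) y -
        iteratedDeriv l (fun y => Real.exp (-y) * y ^ (m + 1)) y := by
  have hsmooth (k : ℕ) : ContDiff ℝ l fun y : ℝ => Real.exp (-y) * y ^ k := by fun_prop
  rw [iteratedDeriv_succ', funext fun y => (hasDerivAt_exp_neg_mul_pow_succ m y).deriv,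
    iteratedDeriv_fun_sub (contDiff_const.mul (hsmooth m)).contDiffAt (hsmooth (m + 1)).contDiffAt,
    iteratedDeriv_const_mul _ (hsmooth m).contDiffAt]

section

variable {c : ℝ}

theorem integral_exp_mul_mul_exp_neg_mul_pow (hc : c < 1) (m : ℕ) :
    ∫ y in Set.Ioi (0 : ℝ), Real.exp (c * y) * (Real.exp (-y) * y ^ m) =
      m.factorial / (1 - c) ^ (m + 1) := by
  have hGamma := Real.integral_rpow_mul_exp_neg_mul_Ioi (a := m + 1) (by positivity) (sub_pos.mpr hc)
  rw [add_sub_cancel_right, Real.Gamma_nat_eq_factorial, ← Nat.cast_succ, Real.rpow_natCast] at hGamma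
  convert hGamma using 1
  · refine setIntegral_congr_fun measurableSet_Ioi fun y _ => ?_
    rw [Real.rpow_natCast, ← mul_assoc, ← Real.exp_add]
    ring_nf
  · rw [one_div_pow, div_mul_eq_mul_div, one_mul]

theorem integrableOn_exp_mul_mul_exp_neg_mul_pow (hc : c < 1) (m : ℕ) :
    IntegrableOn (fun y => Real.exp (c * y) * (Real.exp (-y) * y ^ m)) (Set.Ioi 0) :=
  Integrable.of_integral_ne_zero <| by
    rw [integral_exp_mul_mul_exp_neg_mul_pow hc]
    have := sub_pos.mpr hc
    positivity

theorem integrableOn_exp_mul_iteratedDeriv_exp_neg_mul_pow (hc : c < 1) (l n : ℕ) :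
    IntegrableOn (fun y => Real.exp (c * y) *
      iteratedDeriv l (fun y => Real.exp (-y) * y ^ (l + n)) y) (Set.Ioi 0) := by
  induction l generalizing n with
  | zero => simpa using integrableOn_exp_mul_mul_exp_neg_mul_pow hc n
  | succ l ih =>
    simp only [show l + 1 + n = l + n + 1 by ring, iteratedDeriv_succ_exp_neg_mul_pow_succ,
      mul_sub, mul_left_comm (Real.exp _)]
    exact ((ih n).const_mul _).sub (ih (n + 1))

theorem integral_exp_mul_iteratedDeriv_exp_neg_mul_pow (hc : c < 1) (l n : ℕ) :
    ∫ y in Set.Ioi (0 : ℝ), Real.exp (c * y) *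
      iteratedDeriv l (fun y => Real.exp (-y) * y ^ (l + n)) y =
        (-c) ^ l * (l + n).factorial / (1 - c) ^ (l + n + 1) := by
  induction l generalizing n with
  | zero => simpa using integral_exp_mul_mul_exp_neg_mul_pow hc n
  | succ l ih =>
    simp only [show l + 1 + n = l + n + 1 by ring, iteratedDeriv_succ_exp_neg_mul_pow_succ,
      mul_sub, mul_left_comm (Real.exp _)]
    have hint := integrableOn_exp_mul_iteratedDeriv_exp_neg_mul_pow hc l (n + 1)
    have hval := ih (n + 1)
    rw [← add_assoc] at hint hval
    rw [integral_sub ((integrableOn_exp_mul_iteratedDeriv_exp_neg_mul_pow hc l n).const_mul _) hint,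
      integral_const_mul, ih n, hval]
    have h1c : 1 - c ≠ 0 := (sub_pos.mpr hc).ne'
    rw [Nat.factorial_succ]
    push_cast
    field_simp
    rw [pow_succ _ (l + n + 1), pow_succ (-c)]
    ring

end

/-- For natural numbers `l` and `n`, with `g(y) = e^{−y} y^{l+n}`,
`∫₀^∞ e^{y/2} g^{(l)}(y) dy = (−1)^l 2^{n+1} (l+n)!`. -/
theorem integral_exp_half_mul_iteratedDeriv (l n : ℕ) :
    (∫ y in Set.Ioi (0 : ℝ),
        Real.exp (y / 2) *
          iteratedDeriv l (fun y : ℝ => Real.exp (-y) * y ^ (l + n)) y) =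
      (-1 : ℝ) ^ l * 2 ^ (n + 1) * ((l + n).factorial : ℝ) := by
  simp_rw [div_eq_inv_mul _ (2 : ℝ)]
  rw [integral_exp_mul_iteratedDeriv_exp_neg_mul_pow (by norm_num) l n,
    show (1 : ℝ) - 2⁻¹ = 2⁻¹ by norm_num, neg_pow, inv_pow, inv_pow, pow_add, pow_add]
  field_simp
  ring
end

section
/- Let m ≥ 1 and k ≥ 1 be integers and set Q = m + k. For a > 0, define the Poisson kernel P_a : ℝ^{2m} × ℝ^k → ℝ by P_a(X, Z) = a^Q · ((a + ‖X‖²/4)² + ‖Z‖²)^{−(m+k)}. Then P_a is Lebesgue integrable on ℝ^{2m} × ℝ^k, and its integral ∫_{ℝ^{2m}} ∫_{ℝ^k} P_a(X,Z) dZ dX does not depend on a; in particular it equals the corresponding integral with a = 1. -/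
open MeasureTheory Module

lemma eucl_scale {ι : Type*} [Fintype ι] (f : EuclideanSpace ℝ ι → ℝ) (c : ℝ) (hc : 0 < c) :
    ∫ x, f x = c ^ (Fintype.card ι) * ∫ x, f (c • x) := by
  rw [MeasureTheory.Measure.integral_comp_smul volume f c, finrank_euclideanSpace]
  rw [abs_of_nonneg (by positivity), smul_eq_mul]
  field_simp

lemma pk_integrable (m k : ℕ) (hk : 1 ≤ k) (a : ℝ) (ha : 0 < a) :
    Integrable (fun p : EuclideanSpace ℝ (Fin (2 * m)) × EuclideanSpace ℝ (Fin k) =>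
        a ^ (m + k) / ((a + ‖p.1‖ ^ 2 / 4) ^ 2 + ‖p.2‖ ^ 2) ^ (m + k)) := by
  set n := m + k with hn
  have hden : ∀ p : EuclideanSpace ℝ (Fin (2 * m)) × EuclideanSpace ℝ (Fin k),
      (0:ℝ) < (a + ‖p.1‖ ^ 2 / 4) ^ 2 + ‖p.2‖ ^ 2 := fun p => by positivity
  set c : ℝ := min (min (a^2) (a/2)) 1 with hc
  have hcpos : 0 < c := by positivity
  have hc1 : c ≤ 1 := min_le_right _ _
  have hbound : ∀ p : EuclideanSpace ℝ (Fin (2 * m)) × EuclideanSpace ℝ (Fin k),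
      c * (1 + ‖p‖^2) ≤ (a + ‖p.1‖ ^ 2 / 4) ^ 2 + ‖p.2‖ ^ 2 := by
    intro p
    have h1 : ‖p‖ ≤ max ‖p.1‖ ‖p.2‖ := le_of_eq rfl
    have h2 : ‖p‖^2 ≤ ‖p.1‖^2 + ‖p.2‖^2 := by
      rcases le_total ‖p.1‖ ‖p.2‖ with h | h
      · nlinarith [norm_nonneg p.1, norm_nonneg p.2, Prod.norm_def p, max_eq_right h]
      · nlinarith [norm_nonneg p.1, norm_nonneg p.2, Prod.norm_def p, max_eq_left h]
    have e1 : (a + ‖p.1‖ ^ 2 / 4) ^ 2 ≥ a^2 + (a/2) * ‖p.1‖^2 := by nlinarith [norm_nonneg p.1]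
    have : c * (1 + ‖p.1‖^2 + ‖p.2‖^2) ≤ (a + ‖p.1‖ ^ 2 / 4) ^ 2 + ‖p.2‖ ^ 2 := by
      have l1 : c ≤ a^2 := le_trans (min_le_left _ _) (min_le_left _ _)
      have l2 : c ≤ a/2 := le_trans (min_le_left _ _) (min_le_right _ _)
      nlinarith [norm_nonneg p.1, norm_nonneg p.2, sq_nonneg ‖p.1‖, sq_nonneg ‖p.2‖]
    nlinarith [norm_nonneg p.2]
  haveI : (volume : Measure (EuclideanSpace ℝ (Fin (2 * m)) × EuclideanSpace ℝ (Fin k))).IsAddHaarMeasure := by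
    rw [MeasureTheory.Measure.volume_eq_prod]
    exact MeasureTheory.Measure.prod.instIsAddHaarMeasure volume volume
  have hmeas : AEStronglyMeasurable (fun p : EuclideanSpace ℝ (Fin (2 * m)) × EuclideanSpace ℝ (Fin k) =>
      a ^ n / ((a + ‖p.1‖ ^ 2 / 4) ^ 2 + ‖p.2‖ ^ 2) ^ n) volume := by
    apply Continuous.aestronglyMeasurable
    apply Continuous.div continuous_const
    · fun_prop
    · intro p; exact pow_ne_zero _ (hden p).ne'
  have hdim : (finrank ℝ (EuclideanSpace ℝ (Fin (2 * m)) × EuclideanSpace ℝ (Fin k)) : ℝ) < (2 * n : ℕ) := by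
    rw [Module.finrank_prod, finrank_euclideanSpace, finrank_euclideanSpace]
    simp only [Fintype.card_fin]
    push_cast
    have : 1 ≤ (k:ℝ) := by exact_mod_cast hk
    simp only [hn]; push_cast; linarith
  have hint := (integrable_rpow_neg_one_add_norm_sq (μ := (volume : Measure (EuclideanSpace ℝ (Fin (2 * m)) × EuclideanSpace ℝ (Fin k)))) (r := (2*n : ℕ)) hdim).const_mul (a ^ n * (c⁻¹) ^ n)
  refine hint.mono' hmeas (Filter.Eventually.of_forall fun p => ?_)
  have hdp := hden p
  rw [Real.norm_eq_abs, abs_of_nonneg (by positivity)]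
  have key : (c * (1 + ‖p‖^2)) ^ n ≤ ((a + ‖p.1‖ ^ 2 / 4) ^ 2 + ‖p.2‖ ^ 2) ^ n :=
    pow_le_pow_left₀ (by positivity) (hbound p) n
  have hrpow : ((1:ℝ) + ‖p‖ ^ 2) ^ (-(2*n : ℕ) / 2 : ℝ) = ((1 + ‖p‖^2) ^ n)⁻¹ := by
    have h1 : (0:ℝ) < 1 + ‖p‖^2 := by positivity
    rw [show (-(2*n : ℕ) / 2 : ℝ) = -(n:ℝ) by push_cast; ring,
      Real.rpow_neg h1.le, Real.rpow_natCast]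
  rw [hrpow]
  calc a ^ n / ((a + ‖p.1‖ ^ 2 / 4) ^ 2 + ‖p.2‖ ^ 2) ^ n
      ≤ a ^ n / (c * (1 + ‖p‖^2)) ^ n := by
        have := hbound p
        gcongr
    _ = a ^ n * c⁻¹ ^ n * ((1 + ‖p‖ ^ 2) ^ n)⁻¹ := by
        rw [mul_pow, div_eq_mul_inv, mul_inv, inv_pow]; ring


/-- For `m, k ≥ 1` and `Q = m + k`, the Poisson kernel
`P_a(X,Z) = a^Q ((a + ‖X‖²/4)² + ‖Z‖²)^{−(m+k)}` on `ℝ^{2m} × ℝ^k` is integrable and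
its total integral does not depend on `a > 0`: it equals the integral with `a = 1`. -/
theorem poissonKernel_integrable_and_integral_indep
    (m k : ℕ) (hm : 1 ≤ m) (hk : 1 ≤ k) (a : ℝ) (ha : 0 < a) :
    Integrable (fun p : EuclideanSpace ℝ (Fin (2 * m)) × EuclideanSpace ℝ (Fin k) =>
        a ^ (m + k) / ((a + ‖p.1‖ ^ 2 / 4) ^ 2 + ‖p.2‖ ^ 2) ^ (m + k)) ∧
    (∫ X : EuclideanSpace ℝ (Fin (2 * m)), ∫ Z : EuclideanSpace ℝ (Fin k),
        a ^ (m + k) / ((a + ‖X‖ ^ 2 / 4) ^ 2 + ‖Z‖ ^ 2) ^ (m + k)) =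
      (∫ X : EuclideanSpace ℝ (Fin (2 * m)), ∫ Z : EuclideanSpace ℝ (Fin k),
        (1 : ℝ) ^ (m + k) / ((1 + ‖X‖ ^ 2 / 4) ^ 2 + ‖Z‖ ^ 2) ^ (m + k)) := by
  refine ⟨pk_integrable m k hk a ha, ?_⟩
  set n := m + k with hn
  have ha' : a ≠ 0 := ha.ne'
  have hinner : ∀ s : ℝ, 0 ≤ s →
      (∫ Z : EuclideanSpace ℝ (Fin k), a ^ n / ((a + s) ^ 2 + ‖Z‖ ^ 2) ^ n)
        = (a ^ m)⁻¹ * ∫ Z : EuclideanSpace ℝ (Fin k),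
            (1 : ℝ) / ((1 + s / a) ^ 2 + ‖Z‖ ^ 2) ^ n := by
    intro s hs
    rw [eucl_scale (fun Z => a ^ n / ((a + s) ^ 2 + ‖Z‖ ^ 2) ^ n) a ha]
    have hpt : ∀ Z : EuclideanSpace ℝ (Fin k),
        a ^ n / ((a + s) ^ 2 + ‖a • Z‖ ^ 2) ^ n
          = (a ^ Fintype.card (Fin k))⁻¹ * ((a ^ m)⁻¹ *
            ((1 : ℝ) / ((1 + s / a) ^ 2 + ‖Z‖ ^ 2) ^ n)) := by
      intro Z
      have h1 : ‖a • Z‖ ^ 2 = a ^ 2 * ‖Z‖ ^ 2 := by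
        rw [norm_smul, Real.norm_eq_abs, mul_pow, sq_abs]
      have h2 : (a + s) ^ 2 + a ^ 2 * ‖Z‖ ^ 2 = a ^ 2 * ((1 + s / a) ^ 2 + ‖Z‖ ^ 2) := by
        field_simp
      have h3 : (0:ℝ) < (1 + s / a) ^ 2 + ‖Z‖ ^ 2 := by positivity
      rw [h1, h2, mul_pow, ← pow_mul, Fintype.card_fin]
      rw [div_eq_iff (by positivity)]
      field_simp
      rw [hn]; ring
    simp only [hpt]
    rw [integral_const_mul, integral_const_mul, ← mul_assoc,
      mul_inv_cancel₀ (pow_ne_zero _ ha'), one_mul]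
  have hsq : Real.sqrt a ^ 2 = a := Real.sq_sqrt ha.le
  calc (∫ X : EuclideanSpace ℝ (Fin (2 * m)), ∫ Z : EuclideanSpace ℝ (Fin k),
          a ^ n / ((a + ‖X‖ ^ 2 / 4) ^ 2 + ‖Z‖ ^ 2) ^ n)
      = ∫ X : EuclideanSpace ℝ (Fin (2 * m)), (a ^ m)⁻¹ *
          ∫ Z : EuclideanSpace ℝ (Fin k),
            (1 : ℝ) / ((1 + ‖X‖ ^ 2 / 4 / a) ^ 2 + ‖Z‖ ^ 2) ^ n := by
        exact integral_congr_ae (Filter.Eventually.of_forall fun X =>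
          hinner (‖X‖ ^ 2 / 4) (by positivity))
    _ = (∫ X : EuclideanSpace ℝ (Fin (2 * m)), ∫ Z : EuclideanSpace ℝ (Fin k),
          (1 : ℝ) ^ n / ((1 + ‖X‖ ^ 2 / 4) ^ 2 + ‖Z‖ ^ 2) ^ n) := by
        rw [eucl_scale (fun X => (a ^ m)⁻¹ * ∫ Z : EuclideanSpace ℝ (Fin k),
          (1 : ℝ) / ((1 + ‖X‖ ^ 2 / 4 / a) ^ 2 + ‖Z‖ ^ 2) ^ n) (Real.sqrt a)
          (Real.sqrt_pos.2 ha)]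
        have hptX : ∀ X : EuclideanSpace ℝ (Fin (2 * m)),
            ‖Real.sqrt a • X‖ ^ 2 / 4 / a = ‖X‖ ^ 2 / 4 := by
          intro X
          rw [norm_smul, Real.norm_eq_abs, mul_pow, sq_abs, hsq]
          field_simp
        simp only [hptX, Fintype.card_fin, one_pow]
        rw [integral_const_mul, ← mul_assoc, pow_mul, hsq,
          mul_inv_cancel₀ (pow_ne_zero _ ha'), one_mul]
end
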